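/- Let F be a nonnegative almost superadditive random process relative to a measure-preserving semigroup (τ_u)_{u∈Z_+^d} on a probability space, with almost-superadditivity defect controlled by an integrable random variable A, and set γ̃(F) = limsup_{n→∞} (1/|S_n|) E[F_{S_n}]. Then for any α > 0, the probability of the event {ω : limsup_n (1/|S_n|) F_{S_n}(ω) > α} is at most 3^d · γ̃(F) / α. -/

import Mathlib

open MeasureTheory Filter

/-- Adjacency in `ℤ₊^d`: `x ∼ y` iff their `l¹`-distance is 1. -/
def adjN {d : ℕ} (x y : Fin d → ℕ) : Prop := (∑ i, ((x i : ℤ) - (y i : ℤ)).natAbs) = 1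

/-- A box in `ℤ₊^d`: a product of intervals `[aᵢ, bᵢ)` with `aᵢ < bᵢ`. -/
def IsBoxN {d : ℕ} (B : Finset (Fin d → ℕ)) : Prop :=
  ∃ a b : Fin d → ℕ, (∀ i, a i < b i) ∧ B = Fintype.piFinset fun i => Finset.Ico (a i) (b i)

/-- The hypercube `S_n = [0,n)^d ∩ ℤ₊^d`. -/
def cubeN (d n : ℕ) : Finset (Fin d → ℕ) := Fintype.piFinset fun _ => Finset.range n

/-- The inner boundary `∂B = {x ∈ B : ∃ y ∉ B, x ∼ y}`. -/
noncomputable def ibdN {d : ℕ} (B : Finset (Fin d → ℕ)) : Finset (Fin d → ℕ) :=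
  @Finset.filter _ (fun x => ∃ y, y ∉ B ∧ adjN x y) (Classical.decPred _) B

/-- An almost superadditive random process `F = (F_B)` indexed by boxes of `ℤ₊^d`,
relative to a measure-preserving semigroup `(τ_u)` and with defect random variable `A`. -/
structure AlmostSuperadditive {d : ℕ} {Ω : Type*} [MeasurableSpace Ω] (μ : Measure Ω)
    (τ : (Fin d → ℕ) → Ω → Ω) (F : Finset (Fin d → ℕ) → Ω → ℝ) (A : Ω → ℝ) : Prop where
  meas : ∀ u, MeasurePreserving (τ u) μ μ
  semigroup : ∀ u v, τ (u + v) = τ u ∘ τ v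
  int : ∀ B, IsBoxN B → Integrable (F B) μ
  shift : ∀ (u : Fin d → ℕ) (B : Finset (Fin d → ℕ)), IsBoxN B →
    F (B.image fun x => u + x) = (F B) ∘ (τ u)
  Anonneg : ∀ ω, 0 ≤ A ω
  Aint : Integrable A μ
  superadd : ∀ (k : ℕ) (Bs : Fin k → Finset (Fin d → ℕ)),
    (∀ i, IsBoxN (Bs i)) →
    (∀ i j, i ≠ j → Disjoint (Bs i) (Bs j)) →
    IsBoxN (Finset.univ.biUnion Bs) →
    ∀ ω, (∑ i, F (Bs i) ω) - A ω * (∑ i, ((ibdN (Bs i)).card : ℝ))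
      ≤ F (Finset.univ.biUnion Bs) ω

/-- The normalized expectations `n ↦ |S_n|⁻¹ E[F_{S_n}]`. -/
noncomputable def avgSeq {d : ℕ} {Ω : Type*} [MeasurableSpace Ω] (μ : Measure Ω)
    (F : Finset (Fin d → ℕ) → Ω → ℝ) (n : ℕ) : ℝ :=
  (∫ ω, F (cubeN d n) ω ∂μ) / (n : ℝ) ^ d

/-- The time constant `γ̃(F) = limsup_n |S_n|⁻¹ E[F_{S_n}]`. -/
noncomputable def timeConst {d : ℕ} {Ω : Type*} [MeasurableSpace Ω] (μ : Measure Ω)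
    (F : Finset (Fin d → ℕ) → Ω → ℝ) : ℝ :=
  limsup (avgSeq μ F) atTop

/-!
Akcoglu–Krengel's covering argument, with the superadditivity defect carried along.
Fix `ω`, a scale `k` and a window `k² ≤ n ≤ m`. Each point `x` of a cube `S_N` such that some
`F_{S_n}(τ_x ω) > α n^d` carries a translated cube of side `n` on which `F(ω)` is large. Enlarged
to the grid `kℤ^d`, these cubes grow in volume by at most `(1 + 2/k)^d`; a Vitali selection of
pairwise disjoint ones covers a `3^{-d}` share of the points; superadditivity applied to the
selected cubes together with the free `k`-cells of a slightly larger cube `S_L` gives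
`F_{S_L}(ω) ≥ α 3^{-d} (1 + 2/k)^{-d} · #points − A(ω) · o(1) · L^d`, since cells and cubes of
side `≥ k` have boundaries of relative size `≤ 2d/k`. By measure preservation the number of
points integrates to `N^d μ(∃ n ∈ [k², m], F_{S_n} > α n^d)`; let `N`, then `m`, then `k` grow.
-/

open Topology

section

variable {d : ℕ} {Ω : Type*} [MeasurableSpace Ω] {μ : Measure Ω} {τ : (Fin d → ℕ) → Ω → Ω}
  {F : Finset (Fin d → ℕ) → Ω → ℝ} {A : Ω → ℝ}

def boxN (a b : Fin d → ℕ) : Finset (Fin d → ℕ) :=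
  Fintype.piFinset fun i => Finset.Ico (a i) (b i)

@[simp]
lemma mem_boxN {a b y : Fin d → ℕ} : y ∈ boxN a b ↔ ∀ i, a i ≤ y i ∧ y i < b i := by
  simp [boxN]

lemma card_boxN (a b : Fin d → ℕ) : (boxN a b).card = ∏ i, (b i - a i) := by
  simp [boxN]

lemma isBoxN_boxN {a b : Fin d → ℕ} (h : ∀ i, a i < b i) : IsBoxN (boxN a b) :=
  ⟨a, b, h, rfl⟩

lemma card_boxN_add_const (a : Fin d → ℕ) (s : ℕ) :
    (boxN a fun i => a i + s).card = s ^ d := by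
  simp [card_boxN]

lemma boxN_add_one (z : Fin d → ℕ) : boxN z (z + 1) = {z} := by
  ext y
  simp only [mem_boxN, Pi.add_apply, Pi.one_apply, Finset.mem_singleton, funext_iff]
  exact forall_congr' fun i => by omega

lemma isBoxN_singleton (z : Fin d → ℕ) : IsBoxN {z} :=
  boxN_add_one z ▸ isBoxN_boxN fun i => Nat.lt_succ_self (z i)

lemma mem_cubeN {n : ℕ} {y : Fin d → ℕ} : y ∈ cubeN d n ↔ ∀ i, y i < n := by
  simp [cubeN]

lemma cubeN_eq_boxN (n : ℕ) : cubeN d n = boxN 0 fun _ => n := by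
  ext y
  simp [mem_cubeN]

lemma card_cubeN (n : ℕ) : (cubeN d n).card = n ^ d := by
  simp [cubeN_eq_boxN, card_boxN]

lemma isBoxN_cubeN {n : ℕ} (hn : 0 < n) : IsBoxN (cubeN d n) :=
  cubeN_eq_boxN n ▸ isBoxN_boxN fun _ => hn

lemma image_add_cubeN (u : Fin d → ℕ) (n : ℕ) :
    (cubeN d n).image (fun x => u + x) = boxN u fun i => u i + n := by
  ext y
  simp only [Finset.mem_image, mem_cubeN, mem_boxN]
  constructor
  · rintro ⟨z, hz, rfl⟩ i
    simpa using hz i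
  · intro hy
    refine ⟨y - u, fun i => ?_, funext fun i => ?_⟩
    · have := hy i
      simp only [Pi.sub_apply]
      omega
    · have := (hy i).1
      simp only [Pi.add_apply, Pi.sub_apply]
      omega

lemma mem_ibdN {B : Finset (Fin d → ℕ)} {x : Fin d → ℕ} :
    x ∈ ibdN B ↔ x ∈ B ∧ ∃ y, y ∉ B ∧ adjN x y := by
  simp [ibdN]

lemma ibdN_subset (B : Finset (Fin d → ℕ)) : ibdN B ⊆ B :=
  fun _ hx => (mem_ibdN.mp hx).1

lemma adjN.exists_eq_add_one_or {x y : Fin d → ℕ} (h : adjN x y) :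
    ∃ i, (∀ j, j ≠ i → x j = y j) ∧ (y i = x i + 1 ∨ x i = y i + 1) := by
  obtain ⟨i, -, hi⟩ : ∃ i ∈ Finset.univ, ((x i : ℤ) - y i).natAbs ≠ 0 := by
    by_contra! h0
    rw [adjN, Finset.sum_eq_zero h0] at h
    exact zero_ne_one h
  rw [adjN, ← Finset.add_sum_erase _ _ (Finset.mem_univ i)] at h
  have hrest : ∑ j ∈ Finset.univ.erase i, ((x j : ℤ) - y j).natAbs = 0 := by omega
  refine ⟨i, fun j hj => ?_, by omega⟩
  have := Finset.sum_eq_zero_iff.mp hrest j (Finset.mem_erase.mpr ⟨hj, Finset.mem_univ j⟩)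
  omega

lemma card_filter_boxN_eq_mul_le (a b : Fin d → ℕ) (i : Fin d) (c : ℕ) :
    ((boxN a b).filter fun x => x i = c).card * (b i - a i) ≤ (boxN a b).card := by
  classical
  have hslice : ((boxN a b).filter fun x => x i = c) ⊆
      boxN (Function.update a i c) (Function.update b i (c + 1)) := by
    intro x hx
    simp only [Finset.mem_filter, mem_boxN] at hx ⊢
    intro j
    rcases eq_or_ne j i with rfl | hj
    · simp [hx.2]
    · simpa [hj] using hx.1 j
  have hcard : (boxN (Function.update a i c) (Function.update b i (c + 1))).card *
      (b i - a i) ≤ (boxN a b).card := by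
    rw [card_boxN, card_boxN]
    change (∏ j, (Function.update b i (c + 1) - Function.update a i c) j) * _ ≤ _
    rw [← Function.update_sub, Finset.prod_update_of_mem (Finset.mem_univ i),
      ← Finset.mul_prod_erase Finset.univ _ (Finset.mem_univ i), Finset.sdiff_singleton_eq_erase]
    simp [mul_comm]
  exact (Nat.mul_le_mul_right _ (Finset.card_le_card hslice)).trans hcard

/-- The inner boundary lies in the `2d` faces of the box, each a slice of relative size
`1/(bᵢ - aᵢ) ≤ 1/k`. -/
lemma card_ibdN_boxN_mul_le {a b : Fin d → ℕ} {k : ℕ} (hk : ∀ i, k ≤ b i - a i) :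
    (ibdN (boxN a b)).card * k ≤ 2 * d * (boxN a b).card := by
  set B := boxN a b
  have hcover : ibdN B ⊆ Finset.univ.biUnion fun i =>
      (B.filter fun x => x i = a i) ∪ (B.filter fun x => x i = b i - 1) := by
    intro x hx
    obtain ⟨hxB, y, hyB, hxy⟩ := mem_ibdN.mp hx
    obtain ⟨i, hij, hi⟩ := hxy.exists_eq_add_one_or
    have hxB' := mem_boxN.mp hxB
    have hyi : ¬(a i ≤ y i ∧ y i < b i) := fun hyi =>
      hyB (mem_boxN.mpr fun j => if hj : j = i then hj ▸ hyi else hij j hj ▸ hxB' j)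
    simp only [Finset.mem_biUnion, Finset.mem_univ, true_and, Finset.mem_union,
      Finset.mem_filter, hxB]
    have := hxB' i
    exact ⟨i, by omega⟩
  calc (ibdN B).card * k
      ≤ (∑ i : Fin d, ((B.filter fun x => x i = a i).card +
          (B.filter fun x => x i = b i - 1).card)) * k := by
        gcongr
        exact (Finset.card_le_card hcover).trans
          (Finset.card_biUnion_le.trans (Finset.sum_le_sum fun i _ => Finset.card_union_le _ _))
    _ ≤ ∑ _i : Fin d, (B.card + B.card) := by
        rw [Finset.sum_mul]
        gcongr with i
        rw [add_mul]
        exact add_le_add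
          ((Nat.mul_le_mul_left _ (hk i)).trans (card_filter_boxN_eq_mul_le a b i _))
          ((Nat.mul_le_mul_left _ (hk i)).trans (card_filter_boxN_eq_mul_le a b i _))
    _ = 2 * d * B.card := by simp; ring

lemma card_ibdN_boxN_le {a b : Fin d → ℕ} {k : ℕ} (hk0 : 0 < k) (hk : ∀ i, k ≤ b i - a i) :
    ((ibdN (boxN a b)).card : ℝ) ≤ 2 * d / k * (boxN a b).card := by
  rw [div_mul_eq_mul_div, le_div_iff₀ (by exact_mod_cast hk0)]
  exact_mod_cast card_ibdN_boxN_mul_le hk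

lemma AlmostSuperadditive.sum_sub_le_biUnion (hF : AlmostSuperadditive μ τ F A) {ι : Type*}
    (s : Finset ι) (B : ι → Finset (Fin d → ℕ)) (hB : ∀ i ∈ s, IsBoxN (B i))
    (hdisj : (s : Set ι).PairwiseDisjoint B) (hU : IsBoxN (s.biUnion B)) (ω : Ω) :
    ∑ i ∈ s, F (B i) ω - A ω * ∑ i ∈ s, ((ibdN (B i)).card : ℝ) ≤ F (s.biUnion B) ω := by
  set e := s.equivFin
  have hsum (f : ι → ℝ) : ∑ j, f (e.symm j) = ∑ i ∈ s, f i :=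
    (e.symm.sum_comp fun i : s => f i).trans (Finset.sum_coe_sort s f)
  have hU' : Finset.univ.biUnion (fun j => B (e.symm j)) = s.biUnion B := by
    ext z
    simp only [Finset.mem_biUnion, Finset.mem_univ, true_and]
    exact ⟨fun ⟨j, hj⟩ => ⟨_, (e.symm j).2, hj⟩,
      fun ⟨i, hi, hz⟩ => ⟨e ⟨i, hi⟩, by simpa using hz⟩⟩
  have h := hF.superadd s.card (fun j => B (e.symm j)) (fun j => hB _ (e.symm j).2)
    (fun j j' hjj' => hdisj (e.symm j).2 (e.symm j').2
      (fun h => hjj' (e.symm.injective (Subtype.ext h)))) (hU' ▸ hU) ω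
  rwa [hU', hsum fun i => F (B i) ω, hsum fun i => ((ibdN (B i)).card : ℝ)] at h

lemma AlmostSuperadditive.sum_sub_le_union (hF : AlmostSuperadditive μ τ F A)
    (hpos : ∀ B, IsBoxN B → ∀ ω, 0 ≤ F B ω) {ι κ : Type*} (s : Finset ι) (r : Finset κ)
    (P : ι → Finset (Fin d → ℕ)) (Q : κ → Finset (Fin d → ℕ))
    (hP : ∀ i ∈ s, IsBoxN (P i)) (hQ : ∀ j ∈ r, IsBoxN (Q j))
    (hPd : (s : Set ι).PairwiseDisjoint P) (hQd : (r : Set κ).PairwiseDisjoint Q)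
    (hPQ : ∀ i ∈ s, ∀ j ∈ r, Disjoint (P i) (Q j))
    (hU : IsBoxN (s.biUnion P ∪ r.biUnion Q)) (ω : Ω) :
    ∑ i ∈ s, F (P i) ω - A ω * (∑ i ∈ s, ((ibdN (P i)).card : ℝ) +
      ∑ j ∈ r, ((ibdN (Q j)).card : ℝ)) ≤ F (s.biUnion P ∪ r.biUnion Q) ω := by
  have hU' : (s.disjSum r).biUnion (Sum.elim P Q) = s.biUnion P ∪ r.biUnion Q := by
    ext z
    simp [Finset.mem_disjSum]
  have hdisj : ((s.disjSum r : Finset (ι ⊕ κ)) : Set (ι ⊕ κ)).PairwiseDisjoint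
      (Sum.elim P Q) := by
    rintro (i | j) hx (i' | j') hy hne <;>
      simp only [Finset.mem_coe, Finset.inl_mem_disjSum, Finset.inr_mem_disjSum] at hx hy
    · exact hPd hx hy fun h => hne (congrArg _ h)
    · exact hPQ i hx j' hy
    · exact (hPQ i' hy j hx).symm
    · exact hQd hx hy fun h => hne (congrArg _ h)
  have h := hF.sum_sub_le_biUnion (s.disjSum r) (Sum.elim P Q)
    (by rintro (i | j) h <;> simp only [Finset.inl_mem_disjSum, Finset.inr_mem_disjSum] at h
        exacts [hP i h, hQ j h]) hdisj (hU' ▸ hU) ω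
  rw [hU', Finset.sum_disjSum, Finset.sum_disjSum] at h
  simp only [Sum.elim_inl, Sum.elim_inr] at h
  have hQpos : 0 ≤ ∑ j ∈ r, F (Q j) ω := Finset.sum_nonneg fun j hj => hpos _ (hQ j hj) ω
  linarith

/-- Tile `B \ P` by single points, each of boundary at most `1`. -/
lemma AlmostSuperadditive.sub_le_of_subset (hF : AlmostSuperadditive μ τ F A)
    (hpos : ∀ B, IsBoxN B → ∀ ω, 0 ≤ F B ω) {P B : Finset (Fin d → ℕ)} (hP : IsBoxN P)
    (hB : IsBoxN B) (hPB : P ⊆ B) (ω : Ω) :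
    F P ω - A ω * ((ibdN P).card + ((B.card : ℝ) - P.card)) ≤ F B ω := by
  have hU : ({()} : Finset Unit).biUnion (fun _ => P) ∪ (B \ P).biUnion singleton = B := by
    simp [Finset.union_sdiff_of_subset hPB]
  have h := hF.sum_sub_le_union hpos {()} (B \ P) (fun _ => P) singleton (by simp [hP])
    (fun z _ => isBoxN_singleton z) (by simp) (fun z _ z' _ h => by simpa using h)
    (fun _ _ z hz => by simpa using (Finset.mem_sdiff.mp hz).2) (by rwa [hU]) ω
  rw [hU, Finset.sum_singleton, Finset.sum_singleton] at h
  have hcard : ∑ z ∈ B \ P, ((ibdN {z}).card : ℝ) ≤ (B.card : ℝ) - P.card :=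
    calc ∑ z ∈ B \ P, ((ibdN {z}).card : ℝ) ≤ ∑ z ∈ B \ P, 1 := by
          gcongr with z
          exact_mod_cast (Finset.card_le_card (ibdN_subset {z})).trans_eq
            (Finset.card_singleton z)
      _ = (B.card : ℝ) - P.card := by
          rw [Finset.sum_const, nsmul_one, Finset.card_sdiff_of_subset hPB,
            Nat.cast_sub (Finset.card_le_card hPB)]
  nlinarith [hF.Anonneg ω]

lemma isBoxN_boxN_smul {k : ℕ} (hk : 0 < k) {p q : Fin d → ℕ} (hpq : ∀ i, p i < q i) :
    IsBoxN (boxN (k • p) (k • q)) :=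
  isBoxN_boxN fun i => by simpa using (Nat.mul_lt_mul_left hk).mpr (hpq i)

lemma card_ibdN_boxN_smul_le {k : ℕ} (hk : 0 < k) {p q : Fin d → ℕ} (hpq : ∀ i, p i < q i) :
    ((ibdN (boxN (k • p) (k • q))).card : ℝ) ≤ 2 * d / k * (boxN (k • p) (k • q)).card :=
  card_ibdN_boxN_le hk fun i => by
    simpa [Nat.mul_add, Nat.add_sub_cancel_left] using
      Nat.sub_le_sub_right (Nat.mul_le_mul_left k (hpq i)) (k * p i)

lemma boxN_smul_subset_cubeN {k M : ℕ} {p q : Fin d → ℕ} (hqM : ∀ i, q i ≤ M) :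
    boxN (k • p) (k • q) ⊆ cubeN d (k * M) := fun y hy => mem_cubeN.mpr fun i =>
  (mem_boxN.mp hy i).2.trans_le (by simpa using Nat.mul_le_mul_left k (hqM i))

def cellN (k : ℕ) (c : Fin d → ℕ) : Finset (Fin d → ℕ) :=
  boxN (k • c) (k • (c + 1))

lemma cellN_subset_of_not_disjoint {k : ℕ} {c p q : Fin d → ℕ}
    (h : ¬Disjoint (cellN k c) (boxN (k • p) (k • q))) : cellN k c ⊆ boxN (k • p) (k • q) := by
  obtain ⟨z, hzc, hzpq⟩ := Finset.not_disjoint_iff.mp h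
  intro y hy
  simp only [cellN, mem_boxN, Pi.smul_apply, smul_eq_mul, Pi.add_apply, Pi.one_apply]
    at hzc hzpq hy ⊢
  intro i
  have hpc : p i ≤ c i :=
    Nat.lt_succ_iff.mp (Nat.lt_of_mul_lt_mul_left ((hzpq i).1.trans_lt (hzc i).2))
  have hcq : c i + 1 ≤ q i := Nat.lt_of_mul_lt_mul_left ((hzc i).1.trans_lt (hzpq i).2)
  exact ⟨(Nat.mul_le_mul_left k hpc).trans (hy i).1,
    (hy i).2.trans_le (Nat.mul_le_mul_left k hcq)⟩

lemma pairwiseDisjoint_cellN (k : ℕ) (s : Set (Fin d → ℕ)) : s.PairwiseDisjoint (cellN k) := by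
  intro c _ c' _ hne
  rw [Function.onFun, Finset.disjoint_left]
  intro z hz hz'
  simp only [cellN, mem_boxN, Pi.smul_apply, smul_eq_mul, Pi.add_apply, Pi.one_apply] at hz hz'
  refine hne (funext fun i => ?_)
  have h1 := Nat.lt_of_mul_lt_mul_left ((hz i).1.trans_lt (hz' i).2)
  have h2 := Nat.lt_of_mul_lt_mul_left ((hz' i).1.trans_lt (hz i).2)
  omega

lemma biUnion_union_biUnion_cellN_eq_cubeN {k M : ℕ} (hk : 0 < k) {ι : Type*} (T : Finset ι)
    (p q : ι → Fin d → ℕ) (hqM : ∀ t ∈ T, ∀ i, q t i ≤ M) :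
    T.biUnion (fun t => boxN (k • p t) (k • q t)) ∪
      ((cubeN d M).filter fun c => ∀ t ∈ T, Disjoint (cellN k c) (boxN (k • p t) (k • q t))
        ).biUnion (cellN k) = cubeN d (k * M) := by
  apply subset_antisymm
  · simp only [Finset.union_subset_iff, Finset.biUnion_subset]
    refine ⟨fun t ht => boxN_smul_subset_cubeN (hqM t ht), fun c hc =>
      boxN_smul_subset_cubeN fun i => mem_cubeN.mp (Finset.mem_filter.mp hc).1 i⟩
  · intro y hy
    set c : Fin d → ℕ := fun i => y i / k
    have hyc : y ∈ cellN k c := mem_boxN.mpr fun i => by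
      simpa [c] using ⟨Nat.mul_div_le (y i) k, Nat.lt_mul_div_succ (y i) hk⟩
    have hcM : c ∈ cubeN d M := mem_cubeN.mpr fun i => Nat.div_lt_of_lt_mul (mem_cubeN.mp hy i)
    by_cases hfree : ∀ t ∈ T, Disjoint (cellN k c) (boxN (k • p t) (k • q t))
    · exact Finset.mem_union_right _
        (Finset.mem_biUnion.mpr ⟨c, Finset.mem_filter.mpr ⟨hcM, hfree⟩, hyc⟩)
    · push Not at hfree
      obtain ⟨t, ht, hmeet⟩ := hfree
      exact Finset.mem_union_left _
        (Finset.mem_biUnion.mpr ⟨t, ht, cellN_subset_of_not_disjoint hmeet hyc⟩)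

/-- Fill the rest of the cube with the free cells of side `k`; all pieces have sides `≥ k`,
so their boundaries make up at most a `2d/k` fraction of the cube. -/
lemma AlmostSuperadditive.sum_sub_le_cubeN (hF : AlmostSuperadditive μ τ F A)
    (hpos : ∀ B, IsBoxN B → ∀ ω, 0 ≤ F B ω) {k M : ℕ} (hk : 0 < k) (hM : 0 < M) {ι : Type*}
    (T : Finset ι) (p q : ι → Fin d → ℕ) (hpq : ∀ t ∈ T, ∀ i, p t i < q t i)
    (hqM : ∀ t ∈ T, ∀ i, q t i ≤ M)
    (hdisj : (T : Set ι).PairwiseDisjoint fun t => boxN (k • p t) (k • q t)) (ω : Ω) :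
    ∑ t ∈ T, F (boxN (k • p t) (k • q t)) ω - A ω * (2 * d / k * ((k * M : ℕ) : ℝ) ^ d)
      ≤ F (cubeN d (k * M)) ω := by
  set Q := fun t => boxN (k • p t) (k • q t)
  set C := (cubeN d M).filter fun c => ∀ t ∈ T, Disjoint (cellN k c) (Q t)
  have hU : T.biUnion Q ∪ C.biUnion (cellN k) = cubeN d (k * M) :=
    biUnion_union_biUnion_cellN_eq_cubeN hk T p q hqM
  have hcell_lt (c : Fin d → ℕ) : ∀ i, c i < (c + 1) i := fun i => Nat.lt_succ_self _
  have hQC : ∀ t ∈ T, ∀ c ∈ C, Disjoint (Q t) (cellN k c) :=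
    fun t ht c hc => ((Finset.mem_filter.mp hc).2 t ht).symm
  have h := hF.sum_sub_le_union hpos T C Q (cellN k)
    (fun t ht => isBoxN_boxN_smul hk (hpq t ht)) (fun c _ => isBoxN_boxN_smul hk (hcell_lt c))
    hdisj (pairwiseDisjoint_cellN k _) hQC (by rw [hU]; exact isBoxN_cubeN (by positivity)) ω
  rw [hU] at h
  have hcard : ∑ t ∈ T, ((Q t).card : ℝ) + ∑ c ∈ C, ((cellN k c).card : ℝ)
      = ((k * M : ℕ) : ℝ) ^ d := by
    have := Finset.card_union_of_disjoint ((Finset.disjoint_biUnion_left _ _ _).mpr fun t ht =>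
      (Finset.disjoint_biUnion_right _ _ _).mpr fun c hc => hQC t ht c hc)
    rw [hU, card_cubeN, Finset.card_biUnion hdisj,
      Finset.card_biUnion (pairwiseDisjoint_cellN k _)] at this
    exact_mod_cast this.symm
  have hbd : ∑ t ∈ T, ((ibdN (Q t)).card : ℝ) + ∑ c ∈ C, ((ibdN (cellN k c)).card : ℝ)
      ≤ 2 * d / k * ((k * M : ℕ) : ℝ) ^ d := by
    rw [← hcard, mul_add, Finset.mul_sum, Finset.mul_sum]
    exact add_le_add (Finset.sum_le_sum fun t ht => card_ibdN_boxN_smul_le hk (hpq t ht))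
      (Finset.sum_le_sum fun c _ => card_ibdN_boxN_smul_le hk (hcell_lt c))
  nlinarith [hF.Anonneg ω]

lemma exists_pairwiseDisjoint_subfamily {ι β α : Type*} [LinearOrder α] (Q : ι → Finset β)
    (r : ι → α) (X : Finset ι) (hne : ∀ x ∈ X, (Q x).Nonempty) :
    ∃ T ⊆ X, (T : Set ι).PairwiseDisjoint Q ∧
      ∀ x ∈ X, ∃ t ∈ T, ¬Disjoint (Q x) (Q t) ∧ r x ≤ r t := by
  classical
  induction X using Finset.strongInduction with
  | H X ih =>
    rcases X.eq_empty_or_nonempty with rfl | hX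
    · exact ⟨∅, subset_rfl, by simp, by simp⟩
    obtain ⟨t₀, ht₀, hmax⟩ := X.exists_max_image r hX
    set X' := X.filter fun x => Disjoint (Q x) (Q t₀)
    have hX' : X' ⊂ X := Finset.filter_ssubset.mpr
      ⟨t₀, ht₀, fun h => (hne t₀ ht₀).ne_empty (disjoint_self.mp h)⟩
    obtain ⟨T, hTX', hT, hcov⟩ := ih X' hX' fun x hx => hne x (Finset.filter_subset _ _ hx)
    have hT₀ : ∀ t ∈ T, Disjoint (Q t) (Q t₀) := fun t ht => (Finset.mem_filter.mp (hTX' ht)).2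
    refine ⟨insert t₀ T, Finset.insert_subset ht₀ (hTX'.trans (Finset.filter_subset _ _)),
      ?_, fun x hx => ?_⟩
    · rw [Finset.coe_insert, Set.pairwiseDisjoint_insert]
      exact ⟨hT, fun t ht _ => (hT₀ t ht).symm⟩
    · by_cases hxt₀ : Disjoint (Q x) (Q t₀)
      · obtain ⟨t, ht, hmeet, hle⟩ := hcov x (Finset.mem_filter.mpr ⟨hx, hxt₀⟩)
        exact ⟨t, Finset.mem_insert_of_mem ht, hmeet, hle⟩
      · exact ⟨t₀, Finset.mem_insert_self _ _, hxt₀, hmax x hx⟩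

/-- Vitali covering for cubes in `ℤ₊^d`: a cube meeting a selected cube of at least its own side
`s` lies in the tripled selected cube. -/
lemma exists_pairwiseDisjoint_card_le (X : Finset (Fin d → ℕ))
    (a b : (Fin d → ℕ) → Fin d → ℕ) (s : (Fin d → ℕ) → ℕ)
    (hmem : ∀ x ∈ X, x ∈ boxN (a x) (b x)) (hside : ∀ x ∈ X, ∀ i, b x i = a x i + s x) :
    ∃ T ⊆ X, (T : Set _).PairwiseDisjoint (fun t => boxN (a t) (b t)) ∧
      X.card ≤ 3 ^ d * ∑ t ∈ T, (boxN (a t) (b t)).card := by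
  classical
  obtain ⟨T, hTX, hT, hcov⟩ := exists_pairwiseDisjoint_subfamily (fun x => boxN (a x) (b x)) s X
    fun x hx => ⟨x, hmem x hx⟩
  refine ⟨T, hTX, hT, ?_⟩
  have hX : X ⊆ T.biUnion fun t => boxN (a t - fun _ => s t) (b t + fun _ => s t) := by
    intro x hx
    obtain ⟨t, ht, hmeet, hst⟩ := hcov x hx
    obtain ⟨z, hzx, hzt⟩ := Finset.not_disjoint_iff.mp hmeet
    refine Finset.mem_biUnion.mpr ⟨t, ht, mem_boxN.mpr fun i => ?_⟩
    have := mem_boxN.mp (hmem x hx) i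
    have := mem_boxN.mp hzx i
    have := mem_boxN.mp hzt i
    have := hside x hx i
    have := hside t (hTX ht) i
    simp only [Pi.sub_apply, Pi.add_apply]
    omega
  calc X.card ≤ ∑ t ∈ T, (boxN (a t - fun _ => s t) (b t + fun _ => s t)).card :=
        (Finset.card_le_card hX).trans Finset.card_biUnion_le
    _ ≤ ∑ t ∈ T, 3 ^ d * (boxN (a t) (b t)).card := by
        gcongr with t ht
        rw [card_boxN, card_boxN, ← Fin.prod_const, ← Finset.prod_mul_distrib]
        gcongr with i
        have := hside t (hTX ht) i
        simp only [Pi.sub_apply, Pi.add_apply]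
        omega
    _ = 3 ^ d * ∑ t ∈ T, (boxN (a t) (b t)).card := (Finset.mul_sum _ _ _).symm

/-- The cube of side `k (⌊n/k⌋ + 2)` made of `k`-cells, starting at the cell of `x`. -/
def alignedCover (k n : ℕ) (x : Fin d → ℕ) : Finset (Fin d → ℕ) :=
  boxN (k • fun i => x i / k) (k • ((fun i => x i / k) + fun _ => n / k + 2))

lemma boxN_subset_alignedCover {k : ℕ} (hk : 0 < k) (n : ℕ) (x : Fin d → ℕ) :
    boxN x (fun i => x i + n) ⊆ alignedCover k n x := by
  intro y hy
  simp only [alignedCover, mem_boxN, Pi.smul_apply, Pi.add_apply, smul_eq_mul] at hy ⊢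
  intro i
  have := Nat.lt_mul_div_succ (x i) hk
  have := Nat.lt_mul_div_succ n hk
  have := Nat.mul_div_le (x i) k
  have := hy i
  constructor <;> nlinarith

lemma card_alignedCover (k n : ℕ) (x : Fin d → ℕ) :
    (alignedCover k n x).card = (k * (n / k + 2)) ^ d := by
  simp [alignedCover, card_boxN, Nat.mul_add]

noncomputable def coverRatio (d k : ℕ) : ℝ := (1 + 2 / (k : ℝ)) ^ d

lemma one_le_coverRatio (d k : ℕ) : 1 ≤ coverRatio d k :=
  one_le_pow₀ (le_add_of_nonneg_right (by positivity))

lemma tendsto_coverRatio (d : ℕ) : Tendsto (coverRatio d) atTop (𝓝 1) := by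
  have := ((tendsto_const_div_atTop_nhds_zero_nat (2 : ℝ)).const_add 1).pow d
  rwa [add_zero, one_pow] at this

lemma card_alignedCover_le {k : ℕ} (hk : 0 < k) {n : ℕ} (hn : k * k ≤ n) (x : Fin d → ℕ) :
    ((alignedCover k n x).card : ℝ) ≤ coverRatio d k * n ^ d := by
  have hkR : (0 : ℝ) < k := by exact_mod_cast hk
  have hside : ((k * (n / k + 2) : ℕ) : ℝ) ≤ (1 + 2 / (k : ℝ)) * n := by
    have h1 : k * (n / k + 2) ≤ n + 2 * k := by
      have := Nat.mul_div_le n k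
      rw [Nat.mul_add]
      omega
    have h2 : 2 * (k : ℝ) ≤ 2 / k * n := by
      have : (k : ℝ) * k ≤ n := by exact_mod_cast hn
      rw [div_mul_eq_mul_div, le_div_iff₀ hkR]
      linarith
    calc ((k * (n / k + 2) : ℕ) : ℝ) ≤ n + 2 * k := by exact_mod_cast h1
      _ ≤ n + 2 / k * n := by linarith
      _ = (1 + 2 / (k : ℝ)) * n := by ring
  rw [card_alignedCover, coverRatio, ← mul_pow, Nat.cast_pow]
  exact pow_le_pow_left₀ (by positivity) hside d

lemma AlmostSuperadditive.mul_card_le_alignedCover (hF : AlmostSuperadditive μ τ F A)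
    (hpos : ∀ B, IsBoxN B → ∀ ω, 0 ≤ F B ω) {k n : ℕ} (hk : 0 < k) (hn : k * k ≤ n)
    {α : ℝ} (hα : 0 ≤ α) {x : Fin d → ℕ} {ω : Ω}
    (hx : α * n ^ d < F (boxN x fun i => x i + n) ω) :
    (α / coverRatio d k - A ω * (2 * d / k + (1 - (coverRatio d k)⁻¹))) *
      (alignedCover k n x).card ≤ F (alignedCover k n x) ω := by
  have hkn : k ≤ n := (Nat.le_mul_of_pos_left k hk).trans hn
  set P := boxN x fun i => x i + n
  set B := alignedCover k n x
  set β := coverRatio d k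
  have hβ : 0 < β := zero_lt_one.trans_le (one_le_coverRatio d k)
  have hPB : P ⊆ B := boxN_subset_alignedCover hk n x
  have hcardP : (P.card : ℝ) = n ^ d := by simp [P, card_boxN_add_const]
  have hBP : B.card / β ≤ (P.card : ℝ) :=
    (div_le_iff₀' hβ).mpr (hcardP ▸ card_alignedCover_le hk hn x)
  have hPB' : (P.card : ℝ) ≤ B.card := by exact_mod_cast Finset.card_le_card hPB
  have hbdP : ((ibdN P).card : ℝ) ≤ 2 * d / k * P.card :=
    card_ibdN_boxN_le hk fun i => by omega
  have hnest : F P ω - A ω * ((ibdN P).card + ((B.card : ℝ) - P.card)) ≤ F B ω :=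
    hF.sub_le_of_subset hpos (isBoxN_boxN fun i => by omega)
      (isBoxN_boxN_smul hk fun i => Nat.lt_add_of_pos_right (by positivity)) hPB ω
  have hdefect : ((ibdN P).card : ℝ) + (B.card - P.card) ≤ (2 * d / k + (1 - β⁻¹)) * B.card :=
    calc ((ibdN P).card : ℝ) + (B.card - P.card)
        ≤ 2 * d / k * B.card + (B.card - B.card / β) := by
          have : (2 * d / k : ℝ) * P.card ≤ 2 * d / k * B.card := by gcongr
          linarith
      _ = (2 * d / k + (1 - β⁻¹)) * B.card := by ring
  have := mul_le_mul_of_nonneg_left hdefect (hF.Anonneg ω)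
  have := mul_le_mul_of_nonneg_left hBP hα
  rw [← hcardP] at hx
  rw [sub_mul, div_mul_eq_mul_div, mul_div_assoc]
  linarith

lemma div_add_le_of_add_le {k y n M : ℕ} (hk : 0 < k) (h : y + n + 2 * k ≤ k * M) :
    y / k + (n / k + 2) ≤ M := by
  refine Nat.le_of_mul_le_mul_left ?_ hk
  have := Nat.mul_div_le y k
  have := Nat.mul_div_le n k
  rw [Nat.mul_add, Nat.mul_add]
  omega

lemma AlmostSuperadditive.mul_card_sub_le_cubeN (hF : AlmostSuperadditive μ τ F A)
    (hpos : ∀ B, IsBoxN B → ∀ ω, 0 ≤ F B ω) {k M : ℕ} (hk : 0 < k) (hM : 0 < M)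
    {α : ℝ} (hα : 0 ≤ α) (ω : Ω) (X : Finset (Fin d → ℕ))
    (hX : ∀ x ∈ X, ∃ n, k * k ≤ n ∧ (∀ i, x i + n + 2 * k ≤ k * M) ∧
      α * n ^ d < F (boxN x fun i => x i + n) ω) :
    α / (3 ^ d * coverRatio d k) * X.card -
        A ω * ((4 * d / k + (1 - (coverRatio d k)⁻¹)) * ((k * M : ℕ) : ℝ) ^ d)
      ≤ F (cubeN d (k * M)) ω := by
  classical
  have hX' (x : Fin d → ℕ) : ∃ n, x ∈ X → k * k ≤ n ∧ (∀ i, x i + n + 2 * k ≤ k * M) ∧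
      α * n ^ d < F (boxN x fun i => x i + n) ω :=
    if hx : x ∈ X then (hX x hx).imp fun _ h _ => h else ⟨0, fun h => absurd h hx⟩
  choose n hn using hX'
  set β := coverRatio d k
  set p : (Fin d → ℕ) → Fin d → ℕ := fun x i => x i / k
  set q : (Fin d → ℕ) → Fin d → ℕ := fun x => p x + fun _ => n x / k + 2
  set Q := fun x => boxN (k • p x) (k • q x)
  have hqM : ∀ x ∈ X, ∀ i, q x i ≤ M := fun x hx i => div_add_le_of_add_le hk ((hn x hx).2.1 i)
  have hmem : ∀ x ∈ X, x ∈ Q x := fun x hx => boxN_subset_alignedCover hk (n x) x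
    (mem_boxN.mpr fun i => ⟨le_rfl, by have := (hn x hx).1; nlinarith⟩)
  obtain ⟨T, hTX, hT, hXT⟩ := exists_pairwiseDisjoint_card_le X (fun x => k • p x)
    (fun x => k • q x) (fun x => k * (n x / k + 2)) hmem (fun x _ i => by simp [q, Nat.mul_add])
  have htile := hF.sum_sub_le_cubeN hpos hk hM T p q
    (fun t _ i => by simp [q]) (fun t ht => hqM t (hTX ht)) hT ω
  change (T : Set _).PairwiseDisjoint Q at hT
  change X.card ≤ 3 ^ d * ∑ t ∈ T, (Q t).card at hXT
  change ∑ t ∈ T, F (Q t) ω - _ ≤ _ at htile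
  have hcube : ∀ t ∈ T, (α / β - A ω * (2 * d / k + (1 - β⁻¹))) * (Q t).card ≤ F (Q t) ω :=
    fun t ht => hF.mul_card_le_alignedCover hpos hk (hn t (hTX ht)).1 hα (hn t (hTX ht)).2.2
  have hvol : ∑ t ∈ T, ((Q t).card : ℝ) ≤ ((k * M : ℕ) : ℝ) ^ d := by
    have := Finset.card_le_card (Finset.biUnion_subset.mpr fun t ht =>
      boxN_smul_subset_cubeN (hqM t (hTX ht)) : T.biUnion Q ⊆ cubeN d (k * M))
    rw [Finset.card_biUnion hT, card_cubeN] at this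
    exact_mod_cast this
  have hXS : (X.card : ℝ) ≤ 3 ^ d * ∑ t ∈ T, ((Q t).card : ℝ) := by exact_mod_cast hXT
  set S := ∑ t ∈ T, ((Q t).card : ℝ)
  have hc : 0 ≤ 2 * d / k + (1 - β⁻¹) :=
    add_nonneg (by positivity) (sub_nonneg.mpr (inv_le_one_of_one_le₀ (one_le_coverRatio d k)))
  have h1 : (α / β - A ω * (2 * d / k + (1 - β⁻¹))) * S ≤ ∑ t ∈ T, F (Q t) ω := by
    rw [Finset.mul_sum]
    exact Finset.sum_le_sum hcube
  have hβ : 0 < β := zero_lt_one.trans_le (one_le_coverRatio d k)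
  have h2 : α / (3 ^ d * β) * X.card ≤ α / β * S :=
    calc α / (3 ^ d * β) * X.card ≤ α / (3 ^ d * β) * (3 ^ d * S) :=
          mul_le_mul_of_nonneg_left hXS (div_nonneg hα (mul_pos (by positivity) hβ).le)
      _ = α / β * S := by field_simp
  have h3 : A ω * (2 * d / k + (1 - β⁻¹)) * S
      ≤ A ω * (2 * d / k + (1 - β⁻¹)) * ((k * M : ℕ) : ℝ) ^ d :=
    mul_le_mul_of_nonneg_left hvol (mul_nonneg (hF.Anonneg ω) hc)
  linear_combination htile + h1 + h2 + h3

def exceedSet (F : Finset (Fin d → ℕ) → Ω → ℝ) (α : ℝ) (n₀ m : ℕ) : Set Ω :=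
  {ω | ∃ n, n₀ ≤ n ∧ n ≤ m ∧ α * n ^ d < F (cubeN d n) ω}

lemma AlmostSuperadditive.nullMeasurableSet_exceedSet (hF : AlmostSuperadditive μ τ F A)
    (α : ℝ) {n₀ : ℕ} (hn₀ : 0 < n₀) (m : ℕ) : NullMeasurableSet (exceedSet F α n₀ m) μ := by
  have : exceedSet F α n₀ m = ⋃ n ∈ Finset.Icc n₀ m, {ω | α * n ^ d < F (cubeN d n) ω} := by
    ext ω
    simp [exceedSet, and_assoc]
  rw [this]
  exact Finset.nullMeasurableSet_biUnion _ fun n hn => nullMeasurableSet_lt aemeasurable_const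
    (hF.int _ (isBoxN_cubeN (hn₀.trans_le (Finset.mem_Icc.mp hn).1))).aemeasurable

open scoped Classical in
lemma AlmostSuperadditive.mul_card_exceedSet_sub_le (hF : AlmostSuperadditive μ τ F A)
    (hpos : ∀ B, IsBoxN B → ∀ ω, 0 ≤ F B ω) {k : ℕ} (hk : 0 < k) {α : ℝ} (hα : 0 ≤ α)
    (m M : ℕ) (ω : Ω) :
    α / (3 ^ d * coverRatio d k) *
        ((cubeN d (k * M)).filter fun x => τ x ω ∈ exceedSet F α (k * k) m).card -
      A ω * ((4 * d / k + (1 - (coverRatio d k)⁻¹)) * ((k * (M + m + 2) : ℕ) : ℝ) ^ d)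
      ≤ F (cubeN d (k * (M + m + 2))) ω := by
  refine hF.mul_card_sub_le_cubeN hpos hk (by omega) hα ω _ fun x hx => ?_
  obtain ⟨hxM, n, hkn, hnm, hxn⟩ := Finset.mem_filter.mp hx
  have hn : 0 < n := (Nat.mul_pos hk hk).trans_le hkn
  refine ⟨n, hkn, fun i => ?_, ?_⟩
  · have := mem_cubeN.mp hxM i
    have := Nat.le_mul_of_pos_left m hk
    rw [Nat.mul_add, Nat.mul_add]
    omega
  · have hshift := congrFun (hF.shift x (cubeN d n) (isBoxN_cubeN hn)) ω
    rw [image_add_cubeN] at hshift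
    rwa [hshift]

lemma integral_sum_indicator_preimage [IsFiniteMeasure μ]
    (hτ : ∀ u, MeasurePreserving (τ u) μ μ) {S : Set Ω} (hS : MeasurableSet S)
    (X : Finset (Fin d → ℕ)) :
    ∫ ω, ∑ x ∈ X, (τ x ⁻¹' S).indicator 1 ω ∂μ = X.card * μ.real S := by
  rw [integral_finsetSum _ fun x _ => (integrable_const 1).indicator ((hτ x).measurable hS),
    Finset.sum_congr rfl fun x _ => (integral_indicator_one ((hτ x).measurable hS)).trans
      ((hτ x).measureReal_preimage hS.nullMeasurableSet),
    Finset.sum_const, nsmul_eq_mul]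

/-- `F` is only a.e. strongly measurable, hence so is `exceedSet`: visits are counted to a
measurable subset of it of full measure. -/
lemma AlmostSuperadditive.le_avgSeq [IsFiniteMeasure μ] (hF : AlmostSuperadditive μ τ F A)
    (hpos : ∀ B, IsBoxN B → ∀ ω, 0 ≤ F B ω) {k : ℕ} (hk : 0 < k) {α : ℝ} (hα : 0 ≤ α)
    (m M : ℕ) :
    α / (3 ^ d * coverRatio d k) * ((M : ℝ) / (M + (m + 2))) ^ d *
        μ.real (exceedSet F α (k * k) m) -
      (4 * d / k + (1 - (coverRatio d k)⁻¹)) * ∫ ω, A ω ∂μ ≤ avgSeq μ F (k * (M + m + 2)) := by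
  classical
  set c := α / (3 ^ d * coverRatio d k)
  set e := 4 * d / k + (1 - (coverRatio d k)⁻¹)
  set G := exceedSet F α (k * k) m
  set L := k * (M + m + 2)
  obtain ⟨S, hSG, hS, hSae⟩ :=
    (hF.nullMeasurableSet_exceedSet α (Nat.mul_pos hk hk) m).exists_measurable_subset_ae_eq
  set count : Ω → ℝ := fun ω => ∑ x ∈ cubeN d (k * M), (τ x ⁻¹' S).indicator 1 ω
  have hcount_int : Integrable count μ :=
    integrable_finsetSum _ fun x _ => (integrable_const 1).indicator ((hF.meas x).measurable hS)
  have hpt (ω : Ω) : c * count ω - A ω * (e * (L : ℝ) ^ d) ≤ F (cubeN d L) ω := by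
    have hle : count ω ≤ ((cubeN d (k * M)).filter fun x => τ x ω ∈ G).card := by
      simp only [count, Set.indicator_apply, Set.mem_preimage, Pi.one_apply, Finset.sum_boole]
      exact_mod_cast Finset.card_le_card fun x hx => by
        simp only [Finset.mem_filter] at hx ⊢
        exact ⟨hx.1, hSG hx.2⟩
    have hc : 0 ≤ c := div_nonneg hα (by positivity [one_le_coverRatio d k])
    have := hF.mul_card_exceedSet_sub_le hpos hk hα m M ω
    nlinarith
  have hint : ∫ ω, (c * count ω - A ω * (e * (L : ℝ) ^ d)) ∂μ ≤ ∫ ω, F (cubeN d L) ω ∂μ :=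
    integral_mono ((hcount_int.const_mul c).sub (hF.Aint.mul_const _))
      (hF.int _ (isBoxN_cubeN (by positivity))) hpt
  rw [integral_sub (hcount_int.const_mul c) (hF.Aint.mul_const _), integral_const_mul,
    integral_mul_const, integral_sum_indicator_preimage hF.meas hS, card_cubeN, Nat.cast_pow,
    measureReal_congr hSae] at hint
  have hratio : ((M : ℝ) / (M + (m + 2))) ^ d * (L : ℝ) ^ d = ((k * M : ℕ) : ℝ) ^ d := by
    rw [← mul_pow]
    congr 1
    simp only [L]
    push_cast
    field_simp
    ring
  rw [avgSeq, le_div_iff₀ (by positivity)]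
  linear_combination hint + c * μ.real G * hratio

lemma le_limsup_of_tendsto_of_le_comp {u v : ℕ → ℝ} {φ : ℕ → ℕ} {L : ℝ}
    (hu : IsBoundedUnder (· ≤ ·) atTop u) (hφ : Tendsto φ atTop atTop)
    (hv : Tendsto v atTop (𝓝 L)) (hle : ∀ M, v M ≤ u (φ M)) : L ≤ limsup u atTop :=
  le_of_forall_lt_imp_le_of_dense fun _ hc =>
    le_limsup_of_frequently_le (hφ.frequently ((hv.eventually (lt_mem_nhds hc)).mono
      fun M hM => hM.le.trans (hle M)).frequently) hu

lemma AlmostSuperadditive.le_timeConst_of_exceedSet [IsFiniteMeasure μ]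
    (hF : AlmostSuperadditive μ τ F A) (hpos : ∀ B, IsBoxN B → ∀ ω, 0 ≤ F B ω)
    (hfin : IsBoundedUnder (· ≤ ·) atTop (avgSeq μ F)) {k : ℕ} (hk : 0 < k) {α : ℝ}
    (hα : 0 ≤ α) (m : ℕ) :
    α / (3 ^ d * coverRatio d k) * μ.real (exceedSet F α (k * k) m) -
      (4 * d / k + (1 - (coverRatio d k)⁻¹)) * ∫ ω, A ω ∂μ ≤ timeConst μ F := by
  have hratio : Tendsto (fun M : ℕ => ((M : ℝ) / (M + (m + 2))) ^ d) atTop (𝓝 1) := by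
    simpa using (tendsto_natCast_div_add_atTop ((m : ℝ) + 2)).pow d
  have hφ : Tendsto (fun M => k * (M + m + 2)) atTop atTop :=
    tendsto_atTop_mono (fun M => (M.le_add_right (m + 2)).trans (Nat.le_mul_of_pos_left _ hk))
      tendsto_id
  refine le_limsup_of_tendsto_of_le_comp hfin hφ ?_ (hF.le_avgSeq hpos hk hα m)
  simpa using ((hratio.const_mul _).mul_const _).sub_const _

lemma AlmostSuperadditive.le_timeConst [IsFiniteMeasure μ] (hF : AlmostSuperadditive μ τ F A)
    (hpos : ∀ B, IsBoxN B → ∀ ω, 0 ≤ F B ω) (hfin : IsBoundedUnder (· ≤ ·) atTop (avgSeq μ F))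
    {k : ℕ} (hk : 0 < k) {α : ℝ} (hα : 0 ≤ α) :
    α / (3 ^ d * coverRatio d k) *
        μ.real {ω | α < limsup (fun n => F (cubeN d n) ω / (n : ℝ) ^ d) atTop} -
      (4 * d / k + (1 - (coverRatio d k)⁻¹)) * ∫ ω, A ω ∂μ ≤ timeConst μ F := by
  set G := fun m => exceedSet F α (k * k) m
  have hE : {ω | α < limsup (fun n => F (cubeN d n) ω / (n : ℝ) ^ d) atTop} ⊆ ⋃ m, G m := by
    intro ω hω
    have hcob : IsCoboundedUnder (· ≤ ·) atTop fun n => F (cubeN d n) ω / (n : ℝ) ^ d :=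
      isCoboundedUnder_le_of_eventually_le atTop ((eventually_gt_atTop 0).mono
        fun n hn => div_nonneg (hpos _ (isBoxN_cubeN hn) ω) (pow_nonneg n.cast_nonneg d))
    obtain ⟨n, hn, hαn⟩ := frequently_atTop.mp (frequently_lt_of_lt_limsup hcob hω) (k * k + 1)
    exact Set.mem_iUnion.mpr ⟨n, n, by omega, le_rfl,
      (lt_div_iff₀ (pow_pos (Nat.cast_pos.mpr (by omega)) d)).mp hαn⟩
  have hmono : Monotone G := fun m m' hmm' ω ⟨n, hkn, hnm, h⟩ => ⟨n, hkn, hnm.trans hmm', h⟩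
  have hlim : Tendsto (fun m => μ.real (G m)) atTop (𝓝 (μ.real (⋃ m, G m))) :=
    (ENNReal.tendsto_toReal (measure_ne_top μ _)).comp (tendsto_measure_iUnion_atTop hmono)
  have hc : 0 ≤ α / (3 ^ d * coverRatio d k) :=
    div_nonneg hα (by positivity [one_le_coverRatio d k])
  calc _ ≤ α / (3 ^ d * coverRatio d k) * μ.real (⋃ m, G m) -
        (4 * d / k + (1 - (coverRatio d k)⁻¹)) * ∫ ω, A ω ∂μ := by
        gcongr
        exact measure_ne_top μ _
    _ ≤ timeConst μ F := le_of_tendsto' ((hlim.const_mul _).sub_const _)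
        (hF.le_timeConst_of_exceedSet hpos hfin hk hα)

end

/-- **Maximal inequality** (Theorem 3.2 of Akcoglu–Krengel, almost superadditive version):
for a nonnegative almost superadditive process `F` and `α > 0`,
`P(limsup_n |S_n|⁻¹ F_{S_n} > α) ≤ 3^d γ̃(F) / α`. -/
theorem maximal_inequality {d : ℕ} {Ω : Type*} [MeasurableSpace Ω] (μ : Measure Ω)
    [IsProbabilityMeasure μ]
    (τ : (Fin d → ℕ) → Ω → Ω) (F : Finset (Fin d → ℕ) → Ω → ℝ) (A : Ω → ℝ)
    (hF : AlmostSuperadditive μ τ F A)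
    (hpos : ∀ B, IsBoxN B → ∀ ω, 0 ≤ F B ω)
    (hfin : IsBoundedUnder (· ≤ ·) atTop (avgSeq μ F))
    (α : ℝ) (hα : 0 < α) :
    μ {ω | α < limsup (fun n => F (cubeN d n) ω / (n : ℝ) ^ d) atTop}
      ≤ ENNReal.ofReal ((3 : ℝ) ^ d * timeConst μ F / α) := by
  set E := {ω | α < limsup (fun n => F (cubeN d n) ω / (n : ℝ) ^ d) atTop}
  have hlim : Tendsto (fun k : ℕ => α / (3 ^ d * coverRatio d k) * μ.real E -
      (4 * d / k + (1 - (coverRatio d k)⁻¹)) * ∫ ω, A ω ∂μ) atTop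
      (𝓝 (α / (3 ^ d * 1) * μ.real E - (0 + (1 - 1⁻¹)) * ∫ ω, A ω ∂μ)) :=
    ((tendsto_const_nhds.div (tendsto_const_nhds.mul (tendsto_coverRatio d))
      (by positivity)).mul_const _).sub
      (((tendsto_const_div_atTop_nhds_zero_nat _).add
        (tendsto_const_nhds.sub ((tendsto_coverRatio d).inv₀ one_ne_zero))).mul_const _)
  have hE : α / 3 ^ d * μ.real E ≤ timeConst μ F := by
    simpa using le_of_tendsto hlim ((eventually_gt_atTop 0).mono
      fun k hk => hF.le_timeConst hpos hfin hk hα.le)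
  rw [← ofReal_measureReal]
  refine ENNReal.ofReal_le_ofReal ?_
  rw [le_div_iff₀ hα]
  rw [div_mul_eq_mul_div, div_le_iff₀ (by positivity)] at hE
  linarith
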